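/- arXiv:math/0406100 — 5 statements merged into one kernel-verified Lean document; each statement's English description precedes it below -/
import Mathlib

section
/- Let A be an associative ring with 1 and let U be a two-sided ideal of A that is nilpotent, i.e., U^m = 0 for some m ≥ 1. Then H = { u ∈ A^× : u − 1 ∈ U } is a normal subgroup of the group A^× of invertible elements of A, and H is a nilpotent group. -/
/-- Engel words with the convention of the paper: the commutator is
`[x, y] = x⁻¹ * y⁻¹ * x * y`, `engelWord 0 x y = x` and
`engelWord (n+1) x y = [engelWord n x y, y]`; thus for `n ≥ 1`,
`engelWord n x y` is the Engel word `e_n(x, y)`. -/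
def engelWord {G : Type*} [Group G] : ℕ → G → G → G
  | 0, x, _ => x
  | n + 1, x, y => (engelWord n x y)⁻¹ * y⁻¹ * engelWord n x y * y

/-- Iterated Engel words: `epsEngel [(n₁,a₁),…,(n_k,a_k)] y` is
`ε_{(n₁,…,n_k)}(a₁,…,a_k; y)`, defined by `ε_{(n₁)}(a₁;y) = e_{n₁}(a₁,y)` and
`ε_{(n₁,…,n_k)}(a₁,…,a_k;y) = e_{n_k}(a_k, ε_{(n₁,…,n_{k-1})}(a₁,…,a_{k-1};y))`. -/
def epsEngel {G : Type*} [Group G] (l : List (ℕ × G)) (y : G) : G :=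
  l.foldl (fun z p => engelWord p.1 p.2 z) y

/-- `g` is a nil-element if for every `a` there is `n ≥ 1` with `e_n(a, g) = 1`. -/
def IsNilElement {G : Type*} [Group G] (g : G) : Prop :=
  ∀ a : G, ∃ n, 1 ≤ n ∧ engelWord n a g = 1

/-- A group is locally nilpotent if every finitely generated subgroup is nilpotent. -/
def LocallyNilpotent (G : Type*) [Group G] : Prop :=
  ∀ H : Subgroup G, H.FG → Group.IsNilpotent H

/-- `g` is quasi-nil of order ≤ `k`: there are functions `ν i : G^(i+1) → ℕ` (with values ≥ 1,
`ν i` depending only on `a₁,…,a_{i+1}` and `g`) such that for all `a : Fin k → G`,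
`ε_{(ν₁(a₁),…,ν_k(a₁,…,a_k))}(a₁,…,a_k; g) = 1`. -/
def IsQuasiNilOfOrder {G : Type*} [Group G] (k : ℕ) (g : G) : Prop :=
  ∃ ν : ∀ i : Fin k, (Fin ((i : ℕ) + 1) → G) → ℕ,
    (∀ i f, 1 ≤ ν i f) ∧
    ∀ a : Fin k → G,
      epsEngel (List.ofFn fun i : Fin k =>
        (ν i fun j => a (Fin.castLE i.isLt j), a i)) g = 1

/-- `g` is quasi-nil if it is quasi-nil of order ≤ `k` for some `k ≥ 1`. -/
def IsQuasiNil {G : Type*} [Group G] (g : G) : Prop :=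
  ∃ k, 1 ≤ k ∧ IsQuasiNilOfOrder k g

/-- `g` maps to a nil-element of the quotient `G ⧸ N` (for `N` normal). -/
def IsNilElementQuot {G : Type*} [Group G] (N : Subgroup G) (hN : N.Normal) (g : G) : Prop :=
  @IsNilElement (G ⧸ N) (@QuotientGroup.Quotient.group G _ N hN) (QuotientGroup.mk g)

/-! For a two-sided ideal `I` of `A`, the units `u` with `u - 1 ∈ I ^ n` form normal subgroups
`G n` of `Aˣ` with `G 0 = Aˣ`, and the identity
`uvu⁻¹v⁻¹ - 1 = ((u - 1)(v - 1) - (v - 1)(u - 1)) u⁻¹ v⁻¹` shows `⁅G i, G j⁆ ≤ G (i + j)`.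
Hence the `G n ⊓ G 1` form a descending central series of `G 1`, which reaches `1` at `n = m`
since `I ^ m = 0`. -/

open scoped commutatorElement Pointwise

namespace Ideal

variable {A : Type*} [Ring A]

theorem pow_eq_span_pow_set (I : Ideal A) [I.IsTwoSided] (n : ℕ) :
    I ^ n = span ((I : Set A) ^ n) := by
  induction n with
  | zero => simp
  | succ n ih =>
    have : (span ((I : Set A) ^ n)).IsTwoSided := ih ▸ inferInstance
    rw [Submodule.pow_succ, ih, pow_succ, ← span_mul_span', span_eq]

theorem pow_eq_bot_of_prod_eq_zero (I : Ideal A) [I.IsTwoSided] {m : ℕ}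
    (h : ∀ f : Fin m → A, (∀ i, f i ∈ I) → (List.ofFn f).prod = 0) : I ^ m = ⊥ := by
  rw [pow_eq_span_pow_set, span_eq_bot]
  intro x hx
  obtain ⟨f, rfl⟩ := Set.mem_pow.1 hx
  exact h _ fun i => (f i).2

theorem _root_.Units.coe_commutator_sub_one (u v : Aˣ) :
    ((⁅u, v⁆ : Aˣ) : A) - 1 =
      ((u - 1) * (v - 1) - (v - 1) * (u - 1)) * ↑u⁻¹ * ↑v⁻¹ := by
  calc ((⁅u, v⁆ : Aˣ) : A) - 1 = u * v * ↑u⁻¹ * ↑v⁻¹ - v * (u * ↑u⁻¹) * ↑v⁻¹ := by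
        simp [commutatorElement_def]
    _ = _ := by noncomm_ring

def unitsCongrOne (I : Ideal A) : Subgroup Aˣ where
  carrier := {u | (u : A) - 1 ∈ I}
  one_mem' := by simp
  mul_mem' {u v} hu hv := by
    have h : ((u * v : Aˣ) : A) - 1 = u * ((v : A) - 1) + ((u : A) - 1) := by
      push_cast; noncomm_ring
    simpa only [Set.mem_ofPred_eq, h] using I.add_mem (I.mul_mem_left _ hv) hu
  inv_mem' {u} hu := by
    have h : ((u⁻¹ : Aˣ) : A) - 1 = -(↑u⁻¹ * ((u : A) - 1)) := by
      rw [mul_sub, Units.inv_mul, mul_one, neg_sub]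
    simpa only [Set.mem_ofPred_eq, h] using I.neg_mem (I.mul_mem_left _ hu)

variable {I : Ideal A}

@[simp]
theorem mem_unitsCongrOne {u : Aˣ} : u ∈ unitsCongrOne I ↔ (u : A) - 1 ∈ I := Iff.rfl

@[simp]
theorem unitsCongrOne_top : unitsCongrOne (⊤ : Ideal A) = ⊤ :=
  eq_top_iff.2 fun _ _ => mem_unitsCongrOne.2 Submodule.mem_top

@[simp]
theorem unitsCongrOne_bot : unitsCongrOne (⊥ : Ideal A) = ⊥ := by
  ext u
  rw [mem_unitsCongrOne, Submodule.mem_bot, sub_eq_zero, Subgroup.mem_bot, Units.val_eq_one]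

instance unitsCongrOne_normal [I.IsTwoSided] : (unitsCongrOne I).Normal where
  conj_mem u hu g := by
    have h : ((g * u * g⁻¹ : Aˣ) : A) - 1 = g * ((u : A) - 1) * ↑g⁻¹ := by
      push_cast
      rw [mul_sub, mul_one, sub_mul, Units.mul_inv]
    rw [mem_unitsCongrOne, h]
    exact I.mul_mem_right _ (I.mul_mem_left _ hu)

theorem commutator_mem_unitsCongrOne_pow [I.IsTwoSided] {i j : ℕ} {u v : Aˣ}
    (hu : u ∈ unitsCongrOne (I ^ i)) (hv : v ∈ unitsCongrOne (I ^ j)) :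
    ⁅u, v⁆ ∈ unitsCongrOne (I ^ (i + j)) := by
  rw [mem_unitsCongrOne, Units.coe_commutator_sub_one]
  refine mul_mem_right _ _ (mul_mem_right _ _ (sub_mem ?_ ?_))
  · rw [IsTwoSided.pow_add]
    exact mul_mem_mul hu hv
  · rw [add_comm, IsTwoSided.pow_add]
    exact mul_mem_mul hv hu

theorem isNilpotent_unitsCongrOne [I.IsTwoSided] {m : ℕ} (hI : I ^ m = ⊥) :
    Group.IsNilpotent (unitsCongrOne I) := by
  let G := unitsCongrOne I
  refine Subgroup.nilpotent_iff_finite_descending_central_series G |>.2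
    ⟨m, fun n => (unitsCongrOne (I ^ n)).subgroupOf G, ⟨?_, ?_⟩, ?_⟩
  · simp [Submodule.pow_zero, one_eq_top]
  · intro x n hx g
    have hg : (g : Aˣ) ∈ unitsCongrOne (I ^ 1) := by rw [Submodule.pow_one]; exact g.2
    simpa [Subgroup.mem_subgroupOf, commutatorElement_def] using
      commutator_mem_unitsCongrOne_pow hx hg
  · simp [hI]

end Ideal

theorem units_one_add_nilpotent_ideal_nilpotent_general (A : Type*) [Ring A]
    (U : TwoSidedIdeal A) (m : ℕ)
    (hU : ∀ f : Fin m → A, (∀ i, f i ∈ U) → (List.ofFn f).prod = 0) :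
    ∃ H : Subgroup Aˣ, (∀ u : Aˣ, u ∈ H ↔ (u : A) - 1 ∈ U) ∧ H.Normal ∧
      Group.IsNilpotent H := by
  have hpow : U.asIdeal ^ m = ⊥ := U.asIdeal.pow_eq_bot_of_prod_eq_zero hU
  exact ⟨Ideal.unitsCongrOne U.asIdeal, fun _ => TwoSidedIdeal.mem_asIdeal,
    inferInstance, Ideal.isNilpotent_unitsCongrOne hpow⟩

/-- for a nilpotent two-sided ideal `U` of a ring `A` with 1,
`H = {u ∈ Aˣ : u - 1 ∈ U}` is a normal subgroup of `Aˣ`, and `H` is nilpotent. -/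
theorem units_one_add_nilpotent_ideal_nilpotent (A : Type*) [Ring A]
    (U : TwoSidedIdeal A) (m : ℕ) (hm : 1 ≤ m)
    (hU : ∀ f : Fin m → A, (∀ i, f i ∈ U) → (List.ofFn f).prod = 0) :
    ∃ H : Subgroup Aˣ, (∀ u : Aˣ, u ∈ H ↔ (u : A) - 1 ∈ U) ∧ H.Normal ∧
      Group.IsNilpotent H :=
  units_one_add_nilpotent_ideal_nilpotent_general A U m hU
end

section
/- Let A be an associative ring with 1 and let U be a two-sided ideal of A that is locally nilpotent, i.e., every subring of A generated by finitely many elements of U is nilpotent. Then H = { u ∈ A^× : u − 1 ∈ U } is a normal subgroup of the group A^× of invertible elements of A, and H is a locally nilpotent group. -/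
/-!
`H` is the kernel of `Aˣ → (A ⧸ U)ˣ`, hence normal. A subgroup of `H` generated by a finite set
`T` consists of units `u` with `u - 1` and `u⁻¹ - 1` in the subring `S` generated by the finitely
many elements `t - 1`, `t⁻¹ - 1` (`t ∈ T`), and `S ^ m = 0` for some `m`. The units `u` with
`u - 1, u⁻¹ - 1 ∈ S ^ (n + 1)` form subgroups `Kₙ`, and since
`⁅x, y⁆ - 1 = ((x - 1)(y - 1) - (y - 1)(x - 1)) x⁻¹ y⁻¹` we get `⁅Kₙ, K₀⁆ ⊆ Kₙ₊₁`.
So the `Kₙ` cut out a descending central series of `⟨T⟩` which reaches `1` at `n = m`.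
-/

open scoped commutatorElement

theorem Units.val_commutatorElement_sub_one {A : Type*} [Ring A] (x y : Aˣ) :
    ((⁅x, y⁆ : Aˣ) : A) - 1 = (x * y - y * x) * ((x⁻¹ * y⁻¹ : Aˣ) : A) := by
  rw [commutatorElement_def, sub_mul]
  simp only [Units.val_mul, mul_assoc, Units.mul_inv_cancel_left, Units.mul_inv]

namespace Submodule

variable {R A : Type*} [CommRing R] [Ring A] [Algebra R A] {N : Submodule R A}

theorem pow_eq_bot_of_prod_eq_zero {m : ℕ}
    (h : ∀ f : Fin m → A, (∀ i, f i ∈ N) → (List.ofFn f).prod = 0) : N ^ m = ⊥ := by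
  rw [pow_eq_span_pow_set, span_eq_bot]
  intro x hx
  obtain ⟨f, rfl⟩ := Set.mem_pow.mp hx
  exact h _ fun i => (f i).2

theorem pow_succ_mul_le (hN : N * N ≤ N) (n : ℕ) : N ^ (n + 1) * N ≤ N ^ (n + 1) := by
  rw [pow_succ, mul_assoc]
  exact mul_le_mul_right hN _

theorem pow_succ_le_self (hN : N * N ≤ N) : ∀ n : ℕ, N ^ (n + 1) ≤ N
  | 0 => (pow_one N).le
  | n + 1 => (pow_succ N (n + 1)).trans_le (pow_succ_mul_le hN n) |>.trans (pow_succ_le_self hN n)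

theorem mul_sub_one_mem (hN : N * N ≤ N) {n : ℕ} {a b : A}
    (ha : a - 1 ∈ N ^ (n + 1)) (hb : b - 1 ∈ N ^ (n + 1)) : a * b - 1 ∈ N ^ (n + 1) := by
  have hab : (a - 1) * (b - 1) ∈ N ^ (n + 1) :=
    pow_succ_mul_le hN n (mul_mem_mul ha (pow_succ_le_self hN n hb))
  convert add_mem (add_mem ha hb) hab using 1
  noncomm_ring

theorem mul_mem_of_sub_one_mem (hN : N * N ≤ N) {n : ℕ} {c w : A}
    (hc : c ∈ N ^ (n + 1)) (hw : w - 1 ∈ N) : c * w ∈ N ^ (n + 1) := by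
  convert add_mem hc (pow_succ_mul_le hN n (mul_mem_mul hc hw)) using 1
  noncomm_ring

theorem mul_sub_mul_mem {n : ℕ} {a b : A} (ha : a - 1 ∈ N ^ (n + 1)) (hb : b - 1 ∈ N) :
    a * b - b * a ∈ N ^ (n + 2) := by
  have h₁ : (a - 1) * (b - 1) ∈ N ^ (n + 2) := pow_succ N (n + 1) ▸ mul_mem_mul ha hb
  have h₂ : (b - 1) * (a - 1) ∈ N ^ (n + 2) := pow_succ' N (n + 1) ▸ mul_mem_mul hb ha
  convert sub_mem h₁ h₂ using 1
  noncomm_ring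

variable (N) in
/-- Level `n` is cut out by `N ^ (n + 1)`, so that level `0` is cut out by `N` itself. -/
def unitsOneAddPow (hN : N * N ≤ N) (n : ℕ) : Subgroup Aˣ where
  carrier := {u | (u : A) - 1 ∈ N ^ (n + 1) ∧ ((u⁻¹ : Aˣ) : A) - 1 ∈ N ^ (n + 1)}
  one_mem' := by simp
  mul_mem' hu hv :=
    ⟨by simpa using mul_sub_one_mem hN hu.1 hv.1, by simpa using mul_sub_one_mem hN hv.2 hu.2⟩
  inv_mem' hu := ⟨hu.2, by simpa only [inv_inv] using hu.1⟩

theorem mem_unitsOneAddPow_zero (hN : N * N ≤ N) {u : Aˣ} :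
    u ∈ unitsOneAddPow N hN 0 ↔ (u : A) - 1 ∈ N ∧ ((u⁻¹ : Aˣ) : A) - 1 ∈ N := by
  simp only [unitsOneAddPow, zero_add, pow_one]
  rfl

theorem unitsOneAddPow_le_zero (hN : N * N ≤ N) (n : ℕ) :
    unitsOneAddPow N hN n ≤ unitsOneAddPow N hN 0 := fun _ hu =>
  (mem_unitsOneAddPow_zero hN).mpr ⟨pow_succ_le_self hN n hu.1, pow_succ_le_self hN n hu.2⟩

theorem unitsOneAddPow_eq_bot (hN : N * N ≤ N) {m : ℕ} (hm : N ^ m = ⊥) :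
    unitsOneAddPow N hN m = ⊥ := by
  refine (Subgroup.eq_bot_iff_forall _).mpr fun u hu => Units.ext ?_
  simpa [pow_succ, hm, sub_eq_zero] using hu.1

theorem commutatorElement_mem_unitsOneAddPow (hN : N * N ≤ N) {n : ℕ} {x y : Aˣ}
    (hx : x ∈ unitsOneAddPow N hN n) (hy : y ∈ unitsOneAddPow N hN 0) :
    ⁅x, y⁆ ∈ unitsOneAddPow N hN (n + 1) := by
  have sub_one_mem {g : Aˣ} (hg : g ∈ unitsOneAddPow N hN 0) : (g : A) - 1 ∈ N :=
    ((mem_unitsOneAddPow_zero hN).mp hg).1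
  have hxy : (x * y - y * x : A) ∈ N ^ (n + 2) := mul_sub_mul_mem hx.1 (sub_one_mem hy)
  have hx₀ := unitsOneAddPow_le_zero hN n hx
  refine ⟨?_, ?_⟩
  · rw [Units.val_commutatorElement_sub_one]
    exact mul_mem_of_sub_one_mem hN hxy (sub_one_mem (mul_mem (inv_mem hx₀) (inv_mem hy)))
  · rw [commutatorElement_inv, Units.val_commutatorElement_sub_one, ← neg_sub]
    exact mul_mem_of_sub_one_mem hN (neg_mem hxy)
      (sub_one_mem (mul_mem (inv_mem hy) (inv_mem hx₀)))

theorem isNilpotent_of_le_unitsOneAddPow (hN : N * N ≤ N) {m : ℕ} (hm : N ^ m = ⊥)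
    {K : Subgroup Aˣ} (hK : K ≤ unitsOneAddPow N hN 0) : Group.IsNilpotent K := by
  refine (Subgroup.nilpotent_iff_finite_descending_central_series _).mpr
    ⟨m, fun n => (unitsOneAddPow N hN n).subgroupOf K,
      ⟨Subgroup.subgroupOf_eq_top.mpr hK, fun x n hx g => ?_⟩, ?_⟩
  · exact Subgroup.mem_subgroupOf.mpr
      (commutatorElement_mem_unitsOneAddPow hN (Subgroup.mem_subgroupOf.mp hx) (hK g.2))
  · beta_reduce
    rw [unitsOneAddPow_eq_bot hN hm, Subgroup.bot_subgroupOf]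

end Submodule

theorem isNilpotent_closure_of_sub_one_mem {A : Type*} [Ring A] {T : Finset Aˣ}
    {S : NonUnitalSubring A} (hT : ∀ u ∈ T, (u : A) - 1 ∈ S ∧ ((u⁻¹ : Aˣ) : A) - 1 ∈ S)
    {m : ℕ} (hS : ∀ f : Fin m → A, (∀ i, f i ∈ S) → (List.ofFn f).prod = 0) :
    Group.IsNilpotent (Subgroup.closure (T : Set Aˣ)) := by
  let N := AddSubgroup.toIntSubmodule S.toAddSubgroup
  have hN : N * N ≤ N := Submodule.mul_le.mpr fun _ hx _ hy => S.mul_mem hx hy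
  exact Submodule.isNilpotent_of_le_unitsOneAddPow hN (Submodule.pow_eq_bot_of_prod_eq_zero hS)
    ((Subgroup.closure_le _).mpr fun u hu => (Submodule.mem_unitsOneAddPow_zero hN).mpr (hT u hu))

theorem locallyNilpotent_of_isNilpotent_closure {G : Type*} [Group G] (H : Subgroup G)
    (h : ∀ T : Finset G, (T : Set G) ⊆ H → Group.IsNilpotent (Subgroup.closure (T : Set G))) :
    LocallyNilpotent H := by
  classical
  rintro K ⟨T, rfl⟩
  have hT : ((T.image H.subtype : Finset G) : Set G) ⊆ H := by
    rw [Finset.coe_image]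
    rintro _ ⟨x, -, rfl⟩
    exact x.2
  have := h _ hT
  rw [Finset.coe_image, ← MonoidHom.map_closure] at this
  exact Group.nilpotent_of_mulEquiv
    ((Subgroup.closure (T : Set H)).equivMapOfInjective H.subtype H.subtype_injective).symm

theorem TwoSidedIdeal.mem_ker_unitsMap_mk'_iff {A : Type*} [Ring A] (I : TwoSidedIdeal A)
    (u : Aˣ) : u ∈ (Units.map (I.ringCon.mk' : A →* I.ringCon.Quotient)).ker ↔ (u : A) - 1 ∈ I := by
  rw [MonoidHom.mem_ker, Units.ext_iff, Units.coe_map, Units.val_one]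
  exact (RingCon.eq _).trans (I.rel_iff _ _)

/-- for a locally nilpotent two-sided ideal `U` of a ring `A` with 1
(every subring generated by finitely many elements of `U` is nilpotent),
`H = {u ∈ Aˣ : u - 1 ∈ U}` is a normal subgroup of `Aˣ` and is locally nilpotent. -/
theorem units_one_add_locallyNilpotent_ideal_locallyNilpotent (A : Type*) [Ring A]
    (U : TwoSidedIdeal A)
    (hU : ∀ s : Finset A, (s : Set A) ⊆ (U : Set A) →
      ∃ m, 1 ≤ m ∧ ∀ f : Fin m → A,
        (∀ i, f i ∈ NonUnitalSubring.closure (s : Set A)) → (List.ofFn f).prod = 0) :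
    ∃ H : Subgroup Aˣ, (∀ u : Aˣ, u ∈ H ↔ (u : A) - 1 ∈ U) ∧ H.Normal ∧
      LocallyNilpotent H := by
  classical
  let H := (Units.map (U.ringCon.mk' : A →* U.ringCon.Quotient)).ker
  refine ⟨H, U.mem_ker_unitsMap_mk'_iff, inferInstance,
    locallyNilpotent_of_isNilpotent_closure H fun T hT => ?_⟩
  let s : Finset A :=
    T.image (fun u : Aˣ => (u : A) - 1) ∪ T.image (fun u : Aˣ => ((u⁻¹ : Aˣ) : A) - 1)
  have hs : (s : Set A) ⊆ U := by
    simp only [s, Finset.coe_union, Finset.coe_image, Set.union_subset_iff, Set.image_subset_iff]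
    exact ⟨fun u hu => (U.mem_ker_unitsMap_mk'_iff u).mp (hT hu),
      fun u hu => (U.mem_ker_unitsMap_mk'_iff _).mp (inv_mem (hT hu))⟩
  obtain ⟨m, -, hm⟩ := hU s hs
  refine isNilpotent_closure_of_sub_one_mem (fun u hu => ⟨?_, ?_⟩) hm <;>
    refine NonUnitalSubring.subset_closure (Finset.mem_coe.mpr ?_)
  exacts [Finset.mem_union_left _ (Finset.mem_image_of_mem _ hu),
    Finset.mem_union_right _ (Finset.mem_image_of_mem _ hu)]
end

section
/- If a group G contains a non-trivial quasi-nil element, then G contains a non-trivial nil-element. -/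
lemma epsEngel_concat {G : Type*} [Group G] (l : List (ℕ × G)) (p : ℕ × G) (y : G) :
    epsEngel (l ++ [p]) y = engelWord p.1 p.2 (epsEngel l y) := by
  simp [epsEngel, List.foldl_append]

/-- a group with a non-trivial quasi-nil element has a non-trivial
nil-element. -/
theorem exists_nilElement_of_quasiNil {G : Type*} [Group G] (g : G) (hg : g ≠ 1)
    (h : IsQuasiNil g) :
    ∃ g₀ : G, g₀ ≠ 1 ∧ IsNilElement g₀ := by
  obtain ⟨k, -, hq⟩ := h
  induction k with
  | zero =>
    obtain ⟨ν, hν, ha⟩ := hq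
    have := ha (fun _ => 1)
    simp [epsEngel] at this
    exact absurd this hg
  | succ k ih =>
    obtain ⟨ν, hν, ha⟩ := hq
    -- key splitting computation
    have key : ∀ (a' : Fin k → G) (b : G),
        engelWord (ν (Fin.last k) fun j => (Fin.snoc a' b : Fin (k+1) → G) (Fin.castLE (Fin.last k).isLt j)) b
          (epsEngel (List.ofFn fun i : Fin k =>
            (ν i.castSucc fun j => a' (Fin.castLE i.isLt j), a' i)) g) = 1 := by
      intro a' b
      have h1 := ha (Fin.snoc a' b)
      rw [List.ofFn_succ'] at h1
      rw [List.concat_eq_append, epsEngel_concat] at h1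
      have e1 : (fun i : Fin k =>
          ((ν i.castSucc fun j => (Fin.snoc a' b : Fin (k+1) → G) (Fin.castLE i.castSucc.isLt j)),
            (Fin.snoc a' b : Fin (k+1) → G) i.castSucc))
          = fun i : Fin k => (ν i.castSucc fun j => a' (Fin.castLE i.isLt j), a' i) := by
        funext i
        have e2 : (fun j : Fin ((i : ℕ) + 1) => (Fin.snoc a' b : Fin (k+1) → G) (Fin.castLE i.castSucc.isLt j))
            = fun j => a' (Fin.castLE i.isLt j) := by
          funext j
          have : (Fin.castLE i.castSucc.isLt j : Fin (k + 1))
              = Fin.castSucc (Fin.castLE i.isLt j) := by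
            apply Fin.ext; simp
          rw [this, Fin.snoc_castSucc]
        simp [e2, Fin.snoc_castSucc]
      rw [Fin.snoc_last] at h1
      rw [e1] at h1
      exact h1
    by_cases hz : ∃ a' : Fin k → G,
        epsEngel (List.ofFn fun i : Fin k =>
          (ν i.castSucc fun j => a' (Fin.castLE i.isLt j), a' i)) g ≠ 1
    · obtain ⟨a', hz⟩ := hz
      refine ⟨_, hz, ?_⟩
      intro b
      exact ⟨_, hν _ _, key a' b⟩
    · push_neg at hz
      apply ih
      exact ⟨fun i => ν i.castSucc, fun i f => hν _ _, hz⟩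
end

section
/- Let G be a group with a chain of normal subgroups 1 = N_0 ≤ N_1 ≤ … ≤ N_k = G, each N_i normal in G, such that for each i = 1,…,k the quotient N_i/N_{i-1} satisfies the n_i-Engel identity (i.e., e_{n_i}(a,b) ∈ N_{i-1} for all a,b ∈ N_i). Then G satisfies the identity ε_{(n_k, n_{k-1}+1, …, n_1+1)}(x_1,…,x_k; y) ≡ 1. In particular the product variety E_{n_1}E_{n_2}⋯E_{n_k} of n_i-Engel varieties is contained in the variety E_{(n_k, n_{k-1}+1,…,n_1+1)}. -/
private lemma engelWord_succ_left {G : Type*} [Group G] (m : ℕ) (x y : G) :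
    engelWord (m + 1) x y = engelWord m (engelWord 1 x y) y := by
  induction m with
  | zero => rfl
  | succ m ih => show _ = _; rw [engelWord, ih]; rfl

private lemma foldl_engel_mem {G : Type*} [Group G] :
    ∀ (m : ℕ) (f : Fin m → ℕ × G) (y : G) (M : Fin (m + 1) → Subgroup G),
      y ∈ M 0 →
      (∀ (i : Fin m) (z : G), z ∈ M i.castSucc →
        engelWord (f i).1 (f i).2 z ∈ M i.succ) →
      (List.ofFn f).foldl (fun z p => engelWord p.1 p.2 z) y ∈ M (Fin.last m) := by
  intro m
  induction m with
  | zero => intro f y M hy _; simpa using hy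
  | succ m ih =>
    intro f y M hy hstep
    rw [List.ofFn_succ, List.foldl_cons]
    have h0 : engelWord (f 0).1 (f 0).2 y ∈ M (Fin.succ 0) := by
      have := hstep 0 y (by simpa using hy)
      simpa using this
    have := ih (fun i => f i.succ) (engelWord (f 0).1 (f 0).2 y)
      (fun j => M j.succ) h0 ?_
    · simpa [Fin.succ_last] using this
    · intro i z hz
      have := hstep i.succ z (by
        have e : (i.succ).castSucc = (i.castSucc).succ := by
          ext; simp
        rw [e]; exact hz)
      exact this

/-- if `G` has a chain of normal subgroups `1 = N₀ ≤ N₁ ≤ … ≤ N_k = G`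
whose successive quotients `N_i/N_{i-1}` satisfy the `n_i`-Engel identity, then `G`
satisfies the identity `ε_{(n_k, n_{k-1}+1, …, n_1+1)}(x₁,…,x_k; y) ≡ 1`.
(Here `n i` is the Engel degree `n_{i+1}` of the quotient `N (i+1) / N i`.) -/
theorem epsEngel_identity_of_engel_chain {G : Type*} [Group G] (k : ℕ) (hk : 1 ≤ k)
    (n : Fin k → ℕ) (hn : ∀ i, 1 ≤ n i)
    (N : Fin (k + 1) → Subgroup G) (hbot : N 0 = ⊥) (htop : N (Fin.last k) = ⊤)
    (hnorm : ∀ i, (N i).Normal)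
    (hmono : ∀ i : Fin k, N i.castSucc ≤ N i.succ)
    (hEngel : ∀ i : Fin k, ∀ a b : G, a ∈ N i.succ → b ∈ N i.succ →
      engelWord (n i) a b ∈ N i.castSucc) :
    ∀ (x : Fin k → G) (y : G),
      epsEngel (List.ofFn fun j : Fin k =>
        (if (j : ℕ) = 0 then n ⟨k - 1 - (j : ℕ), by omega⟩
          else n ⟨k - 1 - (j : ℕ), by omega⟩ + 1, x j)) y = 1 := by
  intro x y
  have key := foldl_engel_mem k
    (fun j : Fin k =>
      (if (j : ℕ) = 0 then n ⟨k - 1 - (j : ℕ), by omega⟩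
        else n ⟨k - 1 - (j : ℕ), by omega⟩ + 1, x j)) y
    (fun j : Fin (k + 1) => N ⟨k - (j : ℕ), by omega⟩) ?_ ?_
  · have hlast : (⟨k - ((Fin.last k : Fin (k+1)) : ℕ), by omega⟩ : Fin (k+1)) = 0 := by
      ext; simp
    beta_reduce at key
    rw [hlast, hbot] at key
    simpa [epsEngel] using key
  · have h0 : (⟨k - ((0 : Fin (k+1)) : ℕ), by omega⟩ : Fin (k+1)) = Fin.last k := by
      ext; simp [Fin.last]
    beta_reduce
    rw [h0, htop]; trivial
  · intro i z hz
    have hik : (i : ℕ) < k := i.isLt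
    replace hz : z ∈ N ⟨k - (i : ℕ), by omega⟩ := hz
    show engelWord (if (i : ℕ) = 0 then n ⟨k - 1 - (i : ℕ), by omega⟩
        else n ⟨k - 1 - (i : ℕ), by omega⟩ + 1) (x i) z ∈ N ⟨k - ((i : ℕ) + 1), by omega⟩
    set i' : Fin k := ⟨k - 1 - (i : ℕ), by omega⟩ with hi'
    have hsucc : i'.succ = (⟨k - (i : ℕ), by omega⟩ : Fin (k+1)) := by
      ext; simp [hi', Fin.succ]; omega
    have hcast : i'.castSucc = (⟨k - ((i : ℕ) + 1), by omega⟩ : Fin (k+1)) := by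
      ext; simp [hi', Fin.castSucc, Fin.castAdd, Fin.castLE]; omega
    by_cases h0 : (i : ℕ) = 0
    · rw [if_pos h0]
      have hz' : z ∈ N i'.succ := by
        rw [hsucc]
        have : (⟨k - (i : ℕ), by omega⟩ : Fin (k+1)) = Fin.last k := by
          ext; simp [Fin.last]; omega
        rw [this, htop]; trivial
      have hx : x i ∈ N i'.succ := by
        rw [hsucc]
        have : (⟨k - (i : ℕ), by omega⟩ : Fin (k+1)) = Fin.last k := by
          ext; simp [Fin.last]; omega
        rw [this, htop]; trivial
      have := hEngel i' (x i) z hx hz'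
      rw [hcast] at this
      exact this
    · rw [if_neg h0]
      rw [engelWord_succ_left]
      have hzmem : z ∈ N i'.succ := by rw [hsucc]; exact hz
      have hcomm : engelWord 1 (x i) z ∈ N i'.succ := by
        show (x i)⁻¹ * z⁻¹ * (x i) * z ∈ _
        have h1 : (x i)⁻¹ * z⁻¹ * ((x i)⁻¹)⁻¹ ∈ N i'.succ :=
          (hnorm i'.succ).conj_mem _ (inv_mem hzmem) _
        rw [inv_inv] at h1
        exact mul_mem h1 hzmem
      have := hEngel i' (engelWord 1 (x i) z) z hcomm hzmem
      rw [hcast] at this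
      exact this
end

section
/- Let G be a group with a chain of normal subgroups 1 = R_0 ≤ R_1 ≤ … ≤ R_k, each R_i normal in G, such that for every i = 1,…,k the image of R_i in G/R_{i-1} is exactly the set of nil-elements of G/R_{i-1}. Then every element g ∈ R_k that does not lie in R_{k-1} is a quasi-nil element of G whose minimal nil-order is exactly k, i.e., g is quasi-nil of order ≤ k but not quasi-nil of order ≤ k−1. -/
/-!
Write `R m` for the `m`-th term of the chain. By induction on `m`, an element is quasi-nil of
order `≤ m` exactly when it lies in `R m`: peeling off the first Engel word, `g` is quasi-nil of
order `≤ m + 1` iff for every `b` some `e_n(b, g)` is quasi-nil of order `≤ m`, i.e. lies in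
`R m`, i.e. `g` is a nil-element modulo `R m`, i.e. `g ∈ R (m + 1)`. To run this induction,
quasi-nilness is relativised to a normal subgroup `N`: the iterated Engel words need only land
in `N` instead of being trivial.
-/

lemma map_engelWord {G H : Type*} [Group G] [Group H] (f : G →* H) (n : ℕ) (x y : G) :
    f (engelWord n x y) = engelWord n (f x) (f y) := by
  induction n with
  | zero => rfl
  | succ n ih => simp [engelWord, ih]

lemma isNilElementQuot_iff {G : Type*} [Group G] (N : Subgroup G) (hN : N.Normal) (g : G) :
    IsNilElementQuot N hN g ↔ ∀ b : G, ∃ n, 1 ≤ n ∧ engelWord n b g ∈ N := by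
  have hmk (n : ℕ) (b : G) :
      engelWord n (b : G ⧸ N) (g : G ⧸ N) = ((engelWord n b g : G) : G ⧸ N) :=
    (map_engelWord (QuotientGroup.mk' N) n b g).symm
  simp only [IsNilElementQuot, IsNilElement, QuotientGroup.mk_surjective.forall, hmk,
    QuotientGroup.eq_one_iff]

lemma epsEngel_cons {G : Type*} [Group G] (p : ℕ × G) (l : List (ℕ × G)) (y : G) :
    epsEngel (p :: l) y = epsEngel l (engelWord p.1 p.2 y) := rfl

section QuasiNilMod

variable {G : Type*} [Group G] (N : Subgroup G)

def IsQuasiNilOfOrderMod (k : ℕ) (g : G) : Prop :=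
  ∃ ν : ∀ i : Fin k, (Fin ((i : ℕ) + 1) → G) → ℕ,
    (∀ i f, 1 ≤ ν i f) ∧
    ∀ a : Fin k → G,
      epsEngel (List.ofFn fun i : Fin k =>
        (ν i fun j => a (Fin.castLE i.isLt j), a i)) g ∈ N

lemma isQuasiNilOfOrder_iff_mod_bot (k : ℕ) (g : G) :
    IsQuasiNilOfOrder k g ↔ IsQuasiNilOfOrderMod ⊥ k g := by
  simp only [IsQuasiNilOfOrder, IsQuasiNilOfOrderMod, Subgroup.mem_bot]

lemma isQuasiNilOfOrderMod_zero_iff (g : G) : IsQuasiNilOfOrderMod N 0 g ↔ g ∈ N := by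
  simp [IsQuasiNilOfOrderMod, epsEngel]

lemma isQuasiNilOfOrderMod_succ_iff (m : ℕ) (g : G) :
    IsQuasiNilOfOrderMod N (m + 1) g ↔
      ∀ b : G, ∃ n, 1 ≤ n ∧ IsQuasiNilOfOrderMod N m (engelWord n b g) := by
  constructor
  · rintro ⟨ν, hν, hall⟩ b
    refine ⟨ν 0 fun _ => b, hν _ _, fun i f => ν i.succ (Fin.cons b f), fun _ _ => hν _ _,
      fun a => ?_⟩
    have h := hall (Fin.cons b a)
    rw [List.ofFn_succ, epsEngel_cons] at h
    convert h using 2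
    · refine congrArg List.ofFn (funext fun i => ?_)
      refine congrArg (·, _) (congrArg _ (funext fun j => ?_))
      induction j using Fin.cases <;> rfl
    · simp only [Fin.cons_zero]
      congr 2
      funext j
      rw [Fin.fin_one_eq_zero j]
      rfl
  · intro h
    choose n hn ν hν hall using h
    refine ⟨Fin.cases (fun f => n (f 0)) (fun i f => ν (f 0) i fun j => f j.succ),
      fun i f => ?_, fun a => ?_⟩
    · induction i using Fin.cases with
      | zero => exact hn _
      | succ i => exact hν _ _ _
    · rw [List.ofFn_succ, epsEngel_cons]
      exact hall (a 0) fun i => a i.succ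

end QuasiNilMod

lemma isQuasiNilOfOrder_iff_mem_of_radical_chain {G : Type*} [Group G] {k : ℕ}
    (R : Fin (k + 1) → Subgroup G) (hbot : R 0 = ⊥) (hnorm : ∀ i, (R i).Normal)
    (hnil : ∀ i : Fin k, ∀ g : G,
      IsNilElementQuot (R i.castSucc) (hnorm i.castSucc) g ↔ g ∈ R i.succ)
    (m : ℕ) (hm : m ≤ k) (g : G) :
    IsQuasiNilOfOrder m g ↔ g ∈ R ⟨m, Nat.lt_succ_of_le hm⟩ := by
  rw [isQuasiNilOfOrder_iff_mod_bot, ← hbot]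
  induction m generalizing g with
  | zero => exact isQuasiNilOfOrderMod_zero_iff _ g
  | succ m ih =>
    rw [isQuasiNilOfOrderMod_succ_iff]
    refine Iff.trans ?_ (hnil ⟨m, hm⟩ g)
    simp only [isNilElementQuot_iff, ih (Nat.le_of_succ_le hm)]
    rfl

/-- given a chain of normal subgroups `1 = R₀ ≤ R₁ ≤ … ≤ R_k` of `G`
such that the image of `R_i` in `G/R_{i-1}` is exactly the set of nil-elements of
`G/R_{i-1}`, every `g ∈ R_k \ R_{k-1}` is quasi-nil of order ≤ `k` but not of
order ≤ `k - 1`. -/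
theorem quasiNil_order_of_radical_chain {G : Type*} [Group G] (k : ℕ)
    (R : Fin (k + 1) → Subgroup G) (hbot : R 0 = ⊥)
    (hnorm : ∀ i, (R i).Normal)
    (hnil : ∀ i : Fin k, ∀ g : G,
      IsNilElementQuot (R i.castSucc) (hnorm i.castSucc) g ↔ g ∈ R i.succ)
    (g : G) (hgk : g ∈ R (Fin.last k)) (hgk' : g ∉ R ⟨k - 1, by omega⟩) :
    IsQuasiNilOfOrder k g ∧ ¬ IsQuasiNilOfOrder (k - 1) g :=
  have hiff := isQuasiNilOfOrder_iff_mem_of_radical_chain R hbot hnorm hnil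
  ⟨(hiff k le_rfl g).2 hgk, fun h => hgk' ((hiff (k - 1) (Nat.sub_le k 1) g).1 h)⟩
end
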